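/- arXiv:1401.0512 — 4 statements merged into one kernel-verified Lean document; each statement's English description precedes it below -/
import Mathlib

section
/- Let g be a 6-dimensional Lie algebra admitting a basis ω¹, ω², ω³ of (1,0)-forms with structure equations dω¹ = A ω¹∧(ω³+ω̄³), dω² = −A ω²∧(ω³+ω̄³), dω³ = 0, where A = cos θ + i sin θ with θ ∈ [0, π). If θ = 0 then g is isomorphic to the Lie algebra g₁ = (e^{15}, −e^{25}, −e^{35}, e^{45}, 0, 0); if θ ∈ (0, π) then g is isomorphic to g₂^{|α|} with α = −cos θ / sin θ, where g₂^α = (α e^{15}+e^{25}, −e^{15}+α e^{25}, −α e^{35}+e^{45}, −e^{35}−α e^{45}, 0, 0). -/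
/-!
`ad β₅` preserves the abelian ideal spanned by `β₁, …, β₄`, acts on the planes `⟨β₁, β₂⟩` and
`⟨β₃, β₄⟩` by the rotation-dilations `±A`, and `β₆` is central. For `θ = 0` these are the
diagonal maps `±1`, and reordering the basis gives `g₁`. For `θ ∈ (0, π)` rescaling `β₅` by
`1 / sin θ` turns `±A` into `±(cot θ + i)`, and flipping the sign of `β₂` gives `g₂^α` with
`α = cot θ`. When `cos θ < 0`, swapping the two planes first replaces `θ` by `π − θ`, which
turns `α` into `|α|`.
-/

open Module

section PermSMul

variable {ι R M : Type*}

theorem Module.Basis.exists_coe_eq_smul_comp_perm [Semiring R] [AddCommMonoid M] [Module R M]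
    (b : Basis ι R M) (σ : Equiv.Perm ι) {c : ι → R} (hc : ∀ i, IsUnit (c i)) :
    ∃ f : Basis ι R M, ⇑f = fun i => c i • b (σ i) :=
  ⟨(b.reindex σ.symm).isUnitSMul hc, funext fun i => by
    rw [Basis.isUnitSMul_apply, Basis.reindex_apply, Equiv.symm_symm]⟩

theorem lie_smul_comp_perm_eq_zero [CommRing R] [LieRing M] [LieAlgebra R M]
    {b : ι → M} {k : ι} (h : ∀ i j, i ≠ k → j ≠ k → ⁅b i, b j⁆ = 0)
    (σ : Equiv.Perm ι) (hσ : σ k = k) (c : ι → R) :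
    ∀ i j, i ≠ k → j ≠ k → ⁅c i • b (σ i), c j • b (σ j)⁆ = 0 := by
  intro i j hi hj
  have hne : ∀ {l}, l ≠ k → σ l ≠ k := fun hl => hσ ▸ σ.injective.ne hl
  rw [lie_smul, smul_lie, h _ _ (hne hi) (hne hj), smul_zero, smul_zero]

end PermSMul

section Frames

variable {L : Type*} [LieRing L] [LieAlgebra ℝ L]

/-- The brackets dual to `dω¹ = A ω¹ ∧ (ω³ + ω̄³)`, `dω² = −A ω² ∧ (ω³ + ω̄³)`, `dω³ = 0`
with `A = c + i s`, where `ω¹ = β¹ + iβ²`, `ω² = β³ + iβ⁴`, `ω³ = (β⁵ + iβ⁶)/2` and `b k` is the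
vector dual to `βᵏ⁺¹`. -/
structure IsComplexFrame (c s : ℝ) (b : Fin 6 → L) : Prop where
  lie_zero : ⁅b 0, b 4⁆ = -(c • b 0 + s • b 1)
  lie_one : ⁅b 1, b 4⁆ = s • b 0 - c • b 1
  lie_two : ⁅b 2, b 4⁆ = c • b 2 + s • b 3
  lie_three : ⁅b 3, b 4⁆ = -s • b 2 + c • b 3
  lie_four_five : ⁅b 4, b 5⁆ = 0
  lie_eq_zero : ∀ i j, i ≠ 4 → j ≠ 4 → ⁅b i, b j⁆ = 0

structure IsG1Frame (f : Fin 6 → L) : Prop where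
  lie_zero : ⁅f 0, f 4⁆ = -f 0
  lie_one : ⁅f 1, f 4⁆ = f 1
  lie_two : ⁅f 2, f 4⁆ = f 2
  lie_three : ⁅f 3, f 4⁆ = -f 3
  lie_four_five : ⁅f 4, f 5⁆ = 0
  lie_eq_zero : ∀ i j, i ≠ 4 → j ≠ 4 → ⁅f i, f j⁆ = 0

structure IsG2Frame (α : ℝ) (f : Fin 6 → L) : Prop where
  lie_zero : ⁅f 0, f 4⁆ = -(α • f 0) + f 1
  lie_one : ⁅f 1, f 4⁆ = -f 0 - α • f 1
  lie_two : ⁅f 2, f 4⁆ = α • f 2 + f 3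
  lie_three : ⁅f 3, f 4⁆ = -f 2 + α • f 3
  lie_four_five : ⁅f 4, f 5⁆ = 0
  lie_eq_zero : ∀ i j, i ≠ 4 → j ≠ 4 → ⁅f i, f j⁆ = 0

namespace IsComplexFrame

variable {c s : ℝ} {b : Basis (Fin 6) ℝ L}

theorem exists_isG1Frame (h : IsComplexFrame 1 0 ⇑b) : ∃ f : Basis (Fin 6) ℝ L, IsG1Frame ⇑f := by
  let σ : Equiv.Perm (Fin 6) := ⟨![0, 2, 3, 1, 4, 5], ![0, 3, 1, 2, 4, 5], by decide, by decide⟩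
  obtain ⟨f, hf⟩ := b.exists_coe_eq_smul_comp_perm σ (c := fun _ => (1 : ℝ))
    fun _ => isUnit_one
  refine ⟨f, hf ▸ ⟨?_, ?_, ?_, ?_, ?_, lie_smul_comp_perm_eq_zero h.lie_eq_zero σ rfl _⟩⟩ <;>
    simp only [σ, Equiv.coe_fn_mk, Matrix.cons_val, one_smul]
  · rw [h.lie_zero]; module
  · rw [h.lie_two]; module
  · rw [h.lie_three]; module
  · rw [h.lie_one]; module
  · exact h.lie_four_five

/-- Swapping the two planes realises the symmetry `θ ↦ π − θ`. -/
theorem exists_neg (h : IsComplexFrame c s ⇑b) :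
    ∃ b' : Basis (Fin 6) ℝ L, IsComplexFrame (-c) s ⇑b' := by
  let σ : Equiv.Perm (Fin 6) := ⟨![2, 3, 0, 1, 4, 5], ![2, 3, 0, 1, 4, 5], by decide, by decide⟩
  obtain ⟨f, hf⟩ := b.exists_coe_eq_smul_comp_perm σ (c := ![1, -1, 1, -1, 1, 1])
    (by intro i; fin_cases i <;> simp)
  refine ⟨f, hf ▸ ⟨?_, ?_, ?_, ?_, ?_, lie_smul_comp_perm_eq_zero h.lie_eq_zero σ rfl _⟩⟩ <;>
    simp only [σ, Equiv.coe_fn_mk, Matrix.cons_val, one_smul, neg_smul]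
  · rw [h.lie_two]; module
  · rw [neg_lie, h.lie_three]; module
  · rw [h.lie_zero]; module
  · rw [neg_lie, h.lie_one]; module
  · exact h.lie_four_five

theorem exists_isG2Frame (h : IsComplexFrame c s ⇑b) (hs : 0 < s) :
    ∃ f : Basis (Fin 6) ℝ L, IsG2Frame (c / s) ⇑f := by
  obtain ⟨f, hf⟩ := b.exists_coe_eq_smul_comp_perm 1 (c := ![1, -1, 1, 1, s⁻¹, 1])
    (by intro i; fin_cases i <;> simp [hs.ne'])
  refine ⟨f, hf ▸ ⟨?_, ?_, ?_, ?_, ?_, lie_smul_comp_perm_eq_zero h.lie_eq_zero 1 rfl _⟩⟩ <;>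
    simp only [Equiv.Perm.coe_one, id_eq, Matrix.cons_val, one_smul, neg_smul, lie_smul]
  · rw [h.lie_zero]; match_scalars <;> field_simp
  · rw [neg_lie, h.lie_one]; match_scalars <;> field_simp
  · rw [h.lie_two]; match_scalars <;> field_simp
  · rw [h.lie_three]; match_scalars <;> field_simp
  · rw [smul_lie, h.lie_four_five, smul_zero]

end IsComplexFrame

end Frames

theorem stmt5_general (g : Type*) [LieRing g] [LieAlgebra ℝ g]
    (θ : ℝ) (hθπ : θ < Real.pi)
    (β : Module.Basis (Fin 6) ℝ g)
    (h15 : ⁅β 0, β 4⁆ = -(Real.cos θ • β 0 + Real.sin θ • β 1))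
    (h25 : ⁅β 1, β 4⁆ = Real.sin θ • β 0 - Real.cos θ • β 1)
    (h35 : ⁅β 2, β 4⁆ = Real.cos θ • β 2 + Real.sin θ • β 3)
    (h45 : ⁅β 3, β 4⁆ = -Real.sin θ • β 2 + Real.cos θ • β 3)
    (h56 : ⁅β 4, β 5⁆ = 0)
    (hrest : ∀ i j : Fin 6, i ≠ 4 → j ≠ 4 → ⁅β i, β j⁆ = 0) :
    (θ = 0 → ∃ f : Module.Basis (Fin 6) ℝ g,
      -- structure equations of g₁ = (e¹⁵, −e²⁵, −e³⁵, e⁴⁵, 0, 0)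
      ⁅f 0, f 4⁆ = -f 0 ∧ ⁅f 1, f 4⁆ = f 1 ∧ ⁅f 2, f 4⁆ = f 2 ∧ ⁅f 3, f 4⁆ = -f 3 ∧
      ⁅f 4, f 5⁆ = 0 ∧ ∀ i j : Fin 6, i ≠ 4 → j ≠ 4 → ⁅f i, f j⁆ = 0) ∧
    (0 < θ → ∀ α : ℝ, α = |Real.cos θ / Real.sin θ| →
      ∃ f : Module.Basis (Fin 6) ℝ g,
      -- structure equations of g₂^α =
      -- (αe¹⁵+e²⁵, −e¹⁵+αe²⁵, −αe³⁵+e⁴⁵, −e³⁵−αe⁴⁵, 0, 0)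
      ⁅f 0, f 4⁆ = -(α • f 0) + f 1 ∧ ⁅f 1, f 4⁆ = -f 0 - α • f 1 ∧
      ⁅f 2, f 4⁆ = α • f 2 + f 3 ∧ ⁅f 3, f 4⁆ = -f 2 + α • f 3 ∧
      ⁅f 4, f 5⁆ = 0 ∧ ∀ i j : Fin 6, i ≠ 4 → j ≠ 4 → ⁅f i, f j⁆ = 0) := by
  have hβ : IsComplexFrame (Real.cos θ) (Real.sin θ) ⇑β := ⟨h15, h25, h35, h45, h56, hrest⟩
  refine ⟨fun hθ => ?_, fun hθ α hα => ?_⟩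
  · rw [hθ, Real.cos_zero, Real.sin_zero] at hβ
    obtain ⟨f, hf⟩ := hβ.exists_isG1Frame
    exact ⟨f, hf.1, hf.2, hf.3, hf.4, hf.5, hf.6⟩
  · have hs : 0 < Real.sin θ := Real.sin_pos_of_pos_of_lt_pi hθ hθπ
    obtain ⟨b, hb⟩ : ∃ b : Basis (Fin 6) ℝ g, IsComplexFrame |Real.cos θ| (Real.sin θ) ⇑b := by
      rcases le_or_gt 0 (Real.cos θ) with hc | hc
      · exact ⟨β, by rwa [abs_of_nonneg hc]⟩
      · rw [abs_of_neg hc]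
        exact hβ.exists_neg
    obtain ⟨f, hf⟩ := hb.exists_isG2Frame hs
    rw [hα, abs_div, abs_of_pos hs]
    exact ⟨f, hf.1, hf.2, hf.3, hf.4, hf.5, hf.6⟩

/-- a 6-dimensional real Lie algebra with a basis `β¹,…,β⁶` whose
Chevalley–Eilenberg equations are those of the reduced complex equations
`dω¹ = Aω¹∧(ω³+ω̄³)`, `dω² = −Aω²∧(ω³+ω̄³)`, `dω³ = 0` with `A = cosθ + i sinθ`
(equivalently, in terms of brackets:
`[β₁,β₅] = −(cosθ β₁ + sinθ β₂)`, `[β₂,β₅] = sinθ β₁ − cosθ β₂`,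
`[β₃,β₅] = cosθ β₃ + sinθ β₄`, `[β₄,β₅] = −sinθ β₃ + cosθ β₄`, all other brackets
of basis elements zero) is isomorphic to `g₁` if `θ = 0`, and to `g₂^{|cosθ/sinθ|}`
if `θ ∈ (0,π)`; an isomorphism is exhibited by a basis with the target structure
equations. -/
theorem stmt5 (g : Type*) [LieRing g] [LieAlgebra ℝ g]
    (θ : ℝ) (hθ0 : 0 ≤ θ) (hθπ : θ < Real.pi)
    (β : Module.Basis (Fin 6) ℝ g)
    (h15 : ⁅β 0, β 4⁆ = -(Real.cos θ • β 0 + Real.sin θ • β 1))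
    (h25 : ⁅β 1, β 4⁆ = Real.sin θ • β 0 - Real.cos θ • β 1)
    (h35 : ⁅β 2, β 4⁆ = Real.cos θ • β 2 + Real.sin θ • β 3)
    (h45 : ⁅β 3, β 4⁆ = -Real.sin θ • β 2 + Real.cos θ • β 3)
    (h56 : ⁅β 4, β 5⁆ = 0)
    (hrest : ∀ i j : Fin 6, i ≠ 4 → j ≠ 4 → ⁅β i, β j⁆ = 0) :
    (θ = 0 → ∃ f : Module.Basis (Fin 6) ℝ g,
      -- structure equations of g₁ = (e¹⁵, −e²⁵, −e³⁵, e⁴⁵, 0, 0)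
      ⁅f 0, f 4⁆ = -f 0 ∧ ⁅f 1, f 4⁆ = f 1 ∧ ⁅f 2, f 4⁆ = f 2 ∧ ⁅f 3, f 4⁆ = -f 3 ∧
      ⁅f 4, f 5⁆ = 0 ∧ ∀ i j : Fin 6, i ≠ 4 → j ≠ 4 → ⁅f i, f j⁆ = 0) ∧
    (0 < θ → ∀ α : ℝ, α = |Real.cos θ / Real.sin θ| →
      ∃ f : Module.Basis (Fin 6) ℝ g,
      -- structure equations of g₂^α =
      -- (αe¹⁵+e²⁵, −e¹⁵+αe²⁵, −αe³⁵+e⁴⁵, −e³⁵−αe⁴⁵, 0, 0)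
      ⁅f 0, f 4⁆ = -(α • f 0) + f 1 ∧ ⁅f 1, f 4⁆ = -f 0 - α • f 1 ∧
      ⁅f 2, f 4⁆ = α • f 2 + f 3 ∧ ⁅f 3, f 4⁆ = -f 2 + α • f 3 ∧
      ⁅f 4, f 5⁆ = 0 ∧ ∀ i j : Fin 6, i ≠ 4 → j ≠ 4 → ⁅f i, f j⁆ = 0) :=
  stmt5_general g θ hθπ β h15 h25 h35 h45 h56 hrest
end

section
/- For l ∈ ℤ, l > 0, m ∈ ℤ, m > 2, set α = (1/(lπ)) log((m+√(m²−4))/2) and t = lπ. Let B_α be the 4×4 real matrix with 2×2 diagonal blocks ((−α, 1),(−1, −α)) and ((α, 1),(−1, α)). Then the matrix exponential e^{tB_α} has characteristic polynomial p(λ) = (1 − (−1)^l(e^{αt} + e^{−αt})λ + λ²)² = (λ² − (−1)^l m λ + 1)², which has integer coefficients. -/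
/-!
The matrix `t • B_α` is the image of `(t(-α + i), t(α + i)) ∈ ℂ × ℂ` under the block
embedding `ℂ × ℂ → M₄(ℝ)`, `z ↦ ((re z, im z), (-im z, re z))` on each factor. This
embedding is a continuous ring homomorphism, so it commutes with `exp`; at `t = lπ` both
complex exponentials are real, namely `(-1)^l e^{∓αt}`, so `e^{tB_α}` is the diagonal
matrix `diag(a, a, b, b)` with `ab = 1`. Finally `e^{αt} = (m + √(m² - 4))/2` is a root of
`x² - m x + 1`, whence `e^{αt} + e^{-αt} = m`.
-/

open Polynomial

noncomputable def realBlockRep : ℂ × ℂ →+* Matrix (Fin 4) (Fin 4) ℝ where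
  toFun p := !![p.1.re, p.1.im, 0, 0; -p.1.im, p.1.re, 0, 0;
     0, 0, p.2.re, p.2.im; 0, 0, -p.2.im, p.2.re]
  map_one' := by
    ext i j; fin_cases i <;> fin_cases j <;> simp
  map_mul' p q := by
    ext i j
    fin_cases i <;> fin_cases j <;> simp [Matrix.mul_apply, Fin.sum_univ_four] <;> ring
  map_zero' := by
    ext i j; fin_cases i <;> fin_cases j <;> simp
  map_add' p q := by
    ext i j; fin_cases i <;> fin_cases j <;> simp <;> ring

theorem continuous_realBlockRep : Continuous realBlockRep := by
  refine continuous_matrix fun i j => ?_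
  fin_cases i <;> fin_cases j <;> simp [realBlockRep] <;> fun_prop

theorem exp_realBlockRep (z w : ℂ) :
    NormedSpace.exp (realBlockRep (z, w)) = realBlockRep (Complex.exp z, Complex.exp w) := by
  -- `map_exp` needs a normed ring; any matrix norm induces the entrywise topology.
  let := Matrix.linftyOpNormedRing (n := Fin 4) (α := ℝ)
  let := Matrix.linftyOpNormedAlgebra (n := Fin 4) (R := ℝ) (α := ℝ)
  have hpair : (NormedSpace.exp z, NormedSpace.exp w) = NormedSpace.exp (z, w) :=
    Prod.ext (Prod.fst_exp (z, w)).symm (Prod.snd_exp (z, w)).symm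
  rw [Complex.exp_eq_exp_ℂ, hpair]
  exact (NormedSpace.map_exp realBlockRep continuous_realBlockRep _).symm

theorem realBlockRep_ofReal (a b : ℝ) :
    realBlockRep ((a : ℂ), (b : ℂ)) = Matrix.diagonal ![a, a, b, b] := by
  ext i j; fin_cases i <;> fin_cases j <;> simp [realBlockRep]

theorem smul_blockMatrix_eq_realBlockRep (α t : ℝ) :
    t • !![-α, 1, 0, 0; -1, -α, 0, 0; 0, 0, α, 1; 0, 0, -1, α] =
      realBlockRep (((-(α * t) : ℝ) : ℂ) + t * Complex.I, (α * t : ℝ) + t * Complex.I) := by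
  ext i j; fin_cases i <;> fin_cases j <;> simp [realBlockRep] <;> ring

theorem Complex.exp_add_int_mul_pi_mul_I (x : ℝ) (l : ℤ) :
    Complex.exp (x + (l * Real.pi : ℝ) * Complex.I) = (((-1) ^ l * Real.exp x : ℝ) : ℂ) := by
  push_cast
  rw [Complex.exp_add, mul_assoc, Complex.exp_int_mul, Complex.exp_pi_mul_I]
  ring

theorem exp_int_mul_pi_smul_blockMatrix (α t : ℝ) (l : ℤ) (ht : t = l * Real.pi) :
    NormedSpace.exp (t • !![-α, 1, 0, 0; -1, -α, 0, 0; 0, 0, α, 1; 0, 0, -1, α]) =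
      Matrix.diagonal ![(-1) ^ l * Real.exp (-(α * t)), (-1) ^ l * Real.exp (-(α * t)),
        (-1) ^ l * Real.exp (α * t), (-1) ^ l * Real.exp (α * t)] := by
  subst ht
  rw [smul_blockMatrix_eq_realBlockRep, exp_realBlockRep, Complex.exp_add_int_mul_pi_mul_I,
    Complex.exp_add_int_mul_pi_mul_I, realBlockRep_ofReal]

theorem Matrix.charpoly_diagonal_aabb {R : Type*} [CommRing R] (a b : R) :
    (Matrix.diagonal ![a, a, b, b]).charpoly = ((X - C a) * (X - C b)) ^ 2 := by
  rw [Matrix.charpoly_diagonal, Fin.prod_univ_four]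
  simp only [Matrix.cons_val]
  ring

theorem X_sub_C_mul_X_sub_C_of_mul_eq_one {R : Type*} [CommRing R] {a b : R} (h : a * b = 1) :
    (X - C a) * (X - C b) = X ^ 2 - C (a + b) * X + 1 := by
  rw [C_add]
  linear_combination (C_mul.symm.trans (congrArg C h)).trans C_1

theorem half_add_sqrt_add_inv (m : ℝ) (hm : 2 ≤ m) :
    (m + √(m ^ 2 - 4)) / 2 + ((m + √(m ^ 2 - 4)) / 2)⁻¹ = m := by
  have hsq : √(m ^ 2 - 4) ^ 2 = m ^ 2 - 4 := Real.sq_sqrt (by nlinarith)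
  have hpos : 0 < m + √(m ^ 2 - 4) := by positivity
  field_simp
  linear_combination hsq

/-- characteristic polynomial of the matrix exponential `e^{tB_α}` at
`t = lπ`, `α = α_{l,m}`, equals `(λ² − (−1)^l m λ + 1)²`, with integer coefficients. -/
theorem stmt6 (l m : ℤ) (hl : 0 < l) (hm : 2 < m)
    (α : ℝ) (hα : α = (1 / (l * Real.pi)) * Real.log ((m + Real.sqrt ((m : ℝ) ^ 2 - 4)) / 2))
    (t : ℝ) (ht : t = l * Real.pi)
    (B : Matrix (Fin 4) (Fin 4) ℝ)
    (hB : B = !![-α, 1, 0, 0; -1, -α, 0, 0; 0, 0, α, 1; 0, 0, -1, α]) :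
    (NormedSpace.exp (t • B)).charpoly =
      (X ^ 2 - C ((-1 : ℝ) ^ l * (Real.exp (α * t) + Real.exp (-α * t))) * X + 1) ^ 2 ∧
    (NormedSpace.exp (t • B)).charpoly =
      (X ^ 2 - C ((-1 : ℝ) ^ l * (m : ℝ)) * X + 1) ^ 2 ∧
    ∃ q : Polynomial ℤ, q.map (Int.castRingHom ℝ) = (NormedSpace.exp (t • B)).charpoly := by
  have hprod : (-1) ^ l * Real.exp (-(α * t)) * ((-1) ^ l * Real.exp (α * t)) = 1 := by
    rw [mul_mul_mul_comm, ← mul_zpow, ← Real.exp_add]; simp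
  have hcharpoly : (NormedSpace.exp (t • B)).charpoly =
      (X ^ 2 - C ((-1 : ℝ) ^ l * (Real.exp (α * t) + Real.exp (-α * t))) * X + 1) ^ 2 := by
    rw [hB, exp_int_mul_pi_smul_blockMatrix α t l ht, Matrix.charpoly_diagonal_aabb,
      X_sub_C_mul_X_sub_C_of_mul_eq_one hprod, neg_mul, add_comm (Real.exp (α * t)), mul_add]
  have hsum : Real.exp (α * t) + Real.exp (-α * t) = m := by
    have hm' : (2 : ℝ) < m := by exact_mod_cast hm
    have hαt : α * t = Real.log ((m + √((m : ℝ) ^ 2 - 4)) / 2) := by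
      rw [hα, ht]; field_simp
    rw [neg_mul, Real.exp_neg, hαt, Real.exp_log (by positivity)]
    exact half_add_sqrt_add_inv m hm'.le
  refine ⟨hcharpoly, hsum ▸ hcharpoly, (X ^ 2 - C (l.negOnePow * m) * X + 1) ^ 2, ?_⟩
  rw [hcharpoly, hsum, ← Int.cast_negOnePow ℝ l]
  simp
end

section
/- Let h be the 5-dimensional nilpotent Lie algebra with basis e₁,…,e₅ and non-zero brackets [e₁,e₄] = −e₃, [e₁,e₅] = −e₂, [e₄,e₅] = −e₁, and let φ = ad_{e₆} be the derivation of h determined by the Lie algebra g₉ = B_{6,4}¹ with structure equations de¹ = e⁴⁵, de² = e¹⁵+e³⁶, de³ = e¹⁴−e²⁶+e⁵⁶, de⁴ = −e⁵⁶, de⁵ = e⁴⁶, de⁶ = 0. Then the characteristic polynomial of the linear map exp(tφ) : h → h is p(λ) = (λ−1)(λ² − 2λ cos t + 1)², which is integer for t = π. -/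
/-!
`ad_{e₆}` splits as `S + N` with `S³ = -S`, `N² = 0` and `SN = NS`. Summing the exponential
series, `exp (tS) = 1 + sin t • S + (1 - cos t) • S²` and `exp (tN) = 1 + tN`, so
`exp (t ad_{e₆})` is block upper triangular with diagonal blocks `1` and two rotations by `±t`.
Its characteristic polynomial is therefore `(λ - 1)(λ² - 2λ cos t + 1)²`, whatever the
off-diagonal block is.
-/

open Polynomial NormedSpace
open scoped Nat

section TopologicalAlgebra

variable {𝔸 : Type*} [Ring 𝔸] [Algebra ℝ 𝔸]

theorem pow_two_mul_add_one_of_mul_mul_self_eq_neg {A : 𝔸} (hA : A * A * A = -A) (k : ℕ) :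
    A ^ (2 * k + 1) = (-1 : ℝ) ^ k • A := by
  induction k with
  | zero => simp
  | succ k ih =>
    rw [show 2 * (k + 1) + 1 = 2 * k + 1 + 2 by ring, pow_add, ih, pow_two, smul_mul_assoc,
      ← mul_assoc, hA, pow_succ, mul_neg_one, neg_smul, smul_neg]

theorem pow_two_mul_add_two_of_mul_mul_self_eq_neg {A : 𝔸} (hA : A * A * A = -A) (k : ℕ) :
    A ^ (2 * k + 2) = (-1 : ℝ) ^ k • (A * A) := by
  rw [pow_succ, pow_two_mul_add_one_of_mul_mul_self_eq_neg hA, smul_mul_assoc]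

variable [TopologicalSpace 𝔸] [IsTopologicalRing 𝔸]

theorem NormedSpace.exp_eq_one_add_of_mul_self_eq_zero {N : 𝔸} (hN : N * N = 0) :
    exp N = 1 + N := by
  have hvanish : ∀ n ∉ Finset.range 2, ((n ! : ℝ)⁻¹) • N ^ n = 0 := by
    intro n hn
    obtain ⟨k, rfl⟩ : ∃ k, n = k + 2 := ⟨n - 2, by simp at hn; omega⟩
    rw [pow_add, pow_two, hN, mul_zero, smul_zero]
  rw [exp_eq_tsum ℝ]
  beta_reduce
  rw [tsum_eq_sum hvanish]
  simp [Finset.sum_range_succ]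

variable [ContinuousSMul ℝ 𝔸] [T2Space 𝔸]

theorem NormedSpace.exp_smul_of_mul_mul_self_eq_neg {A : 𝔸} (hA : A * A * A = -A) (t : ℝ) :
    exp (t • A) = 1 + Real.sin t • A + (1 - Real.cos t) • (A * A) := by
  let f : ℕ → 𝔸 := fun n ↦ ((n ! : ℝ)⁻¹) • (t • A) ^ n
  have hodd : HasSum (fun k ↦ f (2 * k + 1)) (Real.sin t • A) := by
    convert (Real.hasSum_sin t).smul_const A using 2 with k
    simp only [f, _root_.smul_pow, pow_two_mul_add_one_of_mul_mul_self_eq_neg hA, smul_smul]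
    congr 1
    ring
  -- `A ^ (2 * k) = (-1) ^ k • -A²` except at `k = 0`, where `1 + A²` must be added
  have heven : HasSum (fun k ↦ f (2 * k)) (1 + (1 - Real.cos t) • (A * A)) := by
    convert ((Real.hasSum_cos t).smul_const (-(A * A))).add (hasSum_ite_eq 0 (1 + A * A))
      using 1
    · funext k
      rcases k with _ | k
      · simp [f]
      · rw [if_neg k.succ_ne_zero, add_zero]
        simp only [f, mul_add, mul_one, _root_.smul_pow,
          pow_two_mul_add_two_of_mul_mul_self_eq_neg hA, smul_smul, smul_neg, ← neg_smul]
        congr 1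
        ring
    · module
  rw [exp_eq_tsum ℝ]
  beta_reduce
  rw [(heven.even_add_odd hodd).tsum_eq]
  abel

end TopologicalAlgebra

theorem Matrix.charpoly_rotation_blocks {R : Type*} [CommRing R] (c s p q r u : R) :
    (!![1, 0, 0, 0, 0;
        0, c, s, p, q;
        0, -s, c, r, u;
        0, 0, 0, c, -s;
        0, 0, 0, s, c] : Matrix (Fin 5) (Fin 5) R).charpoly =
      (X - 1) * (X ^ 2 - C (2 * c) * X + C (c ^ 2 + s ^ 2)) ^ 2 := by
  simp only [charpoly, charmatrix, det_succ_column_zero, Fin.sum_univ_succ, Fin.sum_univ_zero,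
    det_unique, Fin.succAbove, submatrix_apply, sub_apply, scalar_apply, diagonal_apply,
    RingHom.mapMatrix_apply, map_apply, of_apply, cons_val', cons_val, cons_val_fin_one,
    Fin.reduceCastSucc, Fin.reduceSucc, Fin.reduceLT, Fin.reduceEq, Fin.isValue, Fin.val_zero,
    Fin.val_one, Fin.default_eq_zero, ↓reduceIte, map_zero, map_one, map_neg, map_mul, map_add,
    map_pow, map_ofNat, pow_one]
  ring

noncomputable def adE6 : Matrix (Fin 5) (Fin 5) ℝ :=
  !![0, 0, 0, 0, 0;
     0, 0, 1, 0, 0;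
     0, -1, 0, 0, 1;
     0, 0, 0, 0, -1;
     0, 0, 0, 1, 0]

noncomputable def adE6Semisimple : Matrix (Fin 5) (Fin 5) ℝ :=
  !![0, 0, 0, 0, 0;
     0, 0, 1, 1/2, 0;
     0, -1, 0, 0, 1/2;
     0, 0, 0, 0, -1;
     0, 0, 0, 1, 0]

noncomputable def adE6Nilpotent : Matrix (Fin 5) (Fin 5) ℝ :=
  !![0, 0, 0, 0, 0;
     0, 0, 0, -1/2, 0;
     0, 0, 0, 0, 1/2;
     0, 0, 0, 0, 0;
     0, 0, 0, 0, 0]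

theorem adE6_eq_add : adE6 = adE6Semisimple + adE6Nilpotent := by
  ext i j
  fin_cases i <;> fin_cases j <;> norm_num [adE6, adE6Semisimple, adE6Nilpotent]

theorem adE6Semisimple_cube :
    adE6Semisimple * adE6Semisimple * adE6Semisimple = -adE6Semisimple := by
  ext i j
  fin_cases i <;> fin_cases j <;> norm_num [adE6Semisimple, Matrix.mul_apply, Fin.sum_univ_succ]

theorem adE6Nilpotent_sq : adE6Nilpotent * adE6Nilpotent = 0 := by
  ext i j
  fin_cases i <;> fin_cases j <;> norm_num [adE6Nilpotent, Matrix.mul_apply, Fin.sum_univ_succ]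

theorem commute_adE6Semisimple_adE6Nilpotent : Commute adE6Semisimple adE6Nilpotent := by
  ext i j
  fin_cases i <;> fin_cases j <;>
    norm_num [adE6Semisimple, adE6Nilpotent, Matrix.mul_apply, Fin.sum_univ_succ]

theorem exp_smul_adE6 (t : ℝ) :
    exp (t • adE6) =
      !![1, 0, 0, 0, 0;
         0, Real.cos t, Real.sin t, (Real.sin t - t * Real.cos t) / 2, t * Real.sin t / 2;
         0, -Real.sin t, Real.cos t, t * Real.sin t / 2, (Real.sin t + t * Real.cos t) / 2;
         0, 0, 0, Real.cos t, -Real.sin t;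
         0, 0, 0, Real.sin t, Real.cos t] := by
  have hN : t • adE6Nilpotent * (t • adE6Nilpotent) = 0 := by
    rw [smul_mul_smul, adE6Nilpotent_sq, smul_zero]
  rw [adE6_eq_add, smul_add,
    Matrix.exp_add_of_commute _ _ ((commute_adE6Semisimple_adE6Nilpotent.smul_left t).smul_right t),
    exp_smul_of_mul_mul_self_eq_neg adE6Semisimple_cube, exp_eq_one_add_of_mul_self_eq_zero hN]
  ext i j
  fin_cases i <;> fin_cases j <;>
    simp [adE6Semisimple, adE6Nilpotent, Matrix.mul_apply, Matrix.one_apply, Fin.sum_univ_succ] <;>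
    ring

/-- for the derivation `φ = ad_{e₆}` of the 5-dimensional nilradical `h` of
`g₉ = B₆,₄¹` (read off from the structure equations, in the basis `e₁,…,e₅` it is the
matrix `M` below), the characteristic polynomial of `exp(tφ)` is
`(λ−1)(λ²−2λcos t+1)²`, which has integer coefficients at `t = π`. -/
theorem stmt8 (M : Matrix (Fin 5) (Fin 5) ℝ)
    (hM : M = !![0, 0, 0, 0, 0;
                 0, 0, 1, 0, 0;
                 0, -1, 0, 0, 1;
                 0, 0, 0, 0, -1;
                 0, 0, 0, 1, 0]) :
    (∀ t : ℝ, (NormedSpace.exp (t • M)).charpoly =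
      (X - 1) * (X ^ 2 - C (2 * Real.cos t) * X + 1) ^ 2) ∧
    (NormedSpace.exp (Real.pi • M)).charpoly =
      (X - 1) * (X ^ 2 + 2 * X + 1) ^ 2 ∧
    ∃ q : Polynomial ℤ, q.map (Int.castRingHom ℝ) =
      (NormedSpace.exp (Real.pi • M)).charpoly := by
  obtain rfl : M = adE6 := hM
  have hcharpoly (t : ℝ) : (exp (t • adE6)).charpoly =
      (X - 1) * (X ^ 2 - C (2 * Real.cos t) * X + 1) ^ 2 := by
    rw [exp_smul_adE6, Matrix.charpoly_rotation_blocks, Real.cos_sq_add_sin_sq, C_1]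
  have hpi : (exp (Real.pi • adE6)).charpoly = (X - 1) * (X ^ 2 + 2 * X + 1) ^ 2 := by
    rw [hcharpoly, Real.cos_pi]
    simp only [mul_neg, mul_one, map_neg, map_ofNat, neg_mul, sub_neg_eq_add]
  refine ⟨hcharpoly, hpi, (X - 1) * (X ^ 2 + 2 * X + 1) ^ 2, ?_⟩
  simp [hpi]
end

section
/- Consider the complex Lie algebra structure equations dω¹ = A ω¹∧(ω³+ω̄³), dω² = −A ω²∧(ω³+ω̄³), dω³ = G₁₁ ω¹∧ω̄¹ + G₁₂ ω¹∧ω̄² + conj(G₁₂) ω²∧ω̄¹ + G₂₂ ω²∧ω̄², with A, G₁₂ ∈ ℂ, G₁₁, G₂₂ ∈ ℝ. Then d² = 0 (the Jacobi identity holds) if and only if (A+conj(A))G₁₁ = 0, (A+conj(A))G₂₂ = 0, and (A−conj(A))G₁₂ = 0. -/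
/-!
`θ = ω³ + ω̄³` is closed, because `dω̄³ = conj (dω³) = -dω³`, and each of `ω¹, ω², ω̄¹, ω̄²`
satisfies `dω = a ω ∧ θ`; so `d²ω = a² ω ∧ θ ∧ θ - a ω ∧ dθ = 0` for them, and `d²ω̄³ = -d²ω³`.
Since `d` sends `1`-forms to `2`-forms, `d²` obeys the even Leibniz rule, so `d² = 0` iff
`d²ω³ = 0`. Finally `d(ωⁱ ∧ ω̄ʲ) = -(aᵢ + āⱼ) ωⁱ ∧ ω̄ʲ ∧ θ`, so `d²ω³` is a combination of the
four independent `3`-forms `ωⁱ ∧ ω̄ʲ ∧ θ` with coefficients `∓(A ± Ā) Gᵢⱼ`.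
-/

noncomputable section

/-- The space of invariant complex forms: the exterior algebra over the span of
`ω¹, ω², ω³, ω̄¹, ω̄², ω̄³` (indexed `0,…,5`). -/
abbrev Lambda : Type := ExteriorAlgebra ℂ (Fin 6 → ℂ)

/-- The generators `ω¹, ω², ω³, ω̄¹, ω̄², ω̄³` as degree-one elements. -/
def w (i : Fin 6) : Lambda := ExteriorAlgebra.ι ℂ (Pi.single i 1)

/-- `D` is an antiderivation (degree `+1` Leibniz rule against `1`-forms), the
defining extension property of the Chevalley–Eilenberg differential. -/
def IsAntideriv (D : Lambda →ₗ[ℂ] Lambda) : Prop :=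
  D 1 = 0 ∧ ∀ (v : Fin 6 → ℂ) (x : Lambda),
    D (ExteriorAlgebra.ι ℂ v * x) =
      D (ExteriorAlgebra.ι ℂ v) * x - ExteriorAlgebra.ι ℂ v * D x

open ExteriorAlgebra

section OneForms

variable {R M : Type*} [CommRing R] [AddCommGroup M] [Module R M] {x y : ExteriorAlgebra R M}

theorem mul_self_eq_zero_of_mem_range_ι (hx : x ∈ LinearMap.range (ι R (M := M))) :
    x * x = 0 := by
  obtain ⟨u, rfl⟩ := hx
  exact ι_sq_zero u

theorem mul_comm_of_mem_range_ι (hx : x ∈ LinearMap.range (ι R (M := M)))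
    (hy : y ∈ LinearMap.range (ι R (M := M))) : y * x = -(x * y) := by
  obtain ⟨u, rfl⟩ := hx
  obtain ⟨v, rfl⟩ := hy
  exact eq_neg_of_add_eq_zero_left (ι_add_mul_swap v u)

end OneForms

local notation "Ω¹" => LinearMap.range (ι ℂ (M := Fin 6 → ℂ))

theorem w_mem (i : Fin 6) : w i ∈ Ω¹ := ⟨_, rfl⟩

theorem ι_eq_sum_smul_w (v : Fin 6 → ℂ) : ι ℂ v = ∑ i, v i • w i := by
  conv_lhs => rw [← (Pi.basisFun ℂ (Fin 6)).sum_repr v]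
  simp only [map_sum, map_smul, Pi.basisFun_repr, Pi.basisFun_apply, w]

namespace IsAntideriv

variable {D : Lambda →ₗ[ℂ] Lambda} {u v t : Lambda}

theorem map_mul_of_mem (hD : IsAntideriv D) (hu : u ∈ Ω¹) (y : Lambda) :
    D (u * y) = D u * y - u * D y := by
  obtain ⟨u, rfl⟩ := hu
  exact hD.2 u y

theorem map_mul_of_mem_exteriorPower_two (hD : IsAntideriv D) {x : Lambda}
    (hx : x ∈ ⋀[ℂ]^2 (Fin 6 → ℂ)) (y : Lambda) : D (x * y) = D x * y + x * D y := by
  rw [exteriorPower, pow_two] at hx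
  refine Submodule.mul_induction_on hx (fun u hu v hv => ?_) (fun x x' hx hx' => ?_)
  · rw [mul_assoc, hD.map_mul_of_mem hu, hD.map_mul_of_mem hv, hD.map_mul_of_mem hu]
    noncomm_ring
  · simp only [add_mul, map_add, hx, hx']
    abel

theorem map_mul_of_eq_smul_mul (hD : IsAntideriv D) (hu : u ∈ Ω¹) (hv : v ∈ Ω¹) (ht : t ∈ Ω¹)
    {a b : ℂ} (hDu : D u = a • (u * t)) (hDv : D v = b • (v * t)) :
    D (u * v) = -(a + b) • (u * v * t) := by
  rw [hD.map_mul_of_mem hu, hDu, hDv, smul_mul_assoc, mul_assoc, mul_comm_of_mem_range_ι hv ht,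
    mul_smul_comm]
  simp only [mul_assoc, mul_neg]
  module

theorem map_map_of_eq_smul_mul (hD : IsAntideriv D) (hu : u ∈ Ω¹) (ht : t ∈ Ω¹) {a : ℂ}
    (hDu : D u = a • (u * t)) (hDt : D t = 0) : D (D u) = 0 := by
  rw [hDu, map_smul, hD.map_mul_of_mem hu, hDu, hDt, smul_mul_assoc, mul_assoc,
    mul_self_eq_zero_of_mem_range_ι ht]
  simp

theorem map_map_ι_mul (hD : IsAntideriv D) {v : Fin 6 → ℂ}
    (hv : D (ι ℂ v) ∈ ⋀[ℂ]^2 (Fin 6 → ℂ)) (y : Lambda) :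
    D (D (ι ℂ v * y)) = D (D (ι ℂ v)) * y + ι ℂ v * D (D y) := by
  rw [hD.2, map_sub, hD.map_mul_of_mem_exteriorPower_two hv, hD.2]
  abel

theorem map_map_eq_zero_iff (hD : IsAntideriv D)
    (hdeg : ∀ i, D (w i) ∈ ⋀[ℂ]^2 (Fin 6 → ℂ)) :
    (∀ x, D (D x) = 0) ↔ ∀ i, D (D (w i)) = 0 := by
  refine ⟨fun h i => h (w i), fun h x => ?_⟩
  have hdeg_ι (v : Fin 6 → ℂ) : D (ι ℂ v) ∈ ⋀[ℂ]^2 (Fin 6 → ℂ) := by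
    rw [ι_eq_sum_smul_w, map_sum]
    exact Submodule.sum_mem _ fun i _ => by rw [map_smul]; exact Submodule.smul_mem _ _ (hdeg i)
  have h_ι (v : Fin 6 → ℂ) : D (D (ι ℂ v)) = 0 := by
    simp [ι_eq_sum_smul_w, h]
  suffices ∀ y, D (D y) = 0 → D (D (x * y)) = 0 by
    simpa using this 1 (by rw [hD.1, map_zero])
  induction x using ExteriorAlgebra.induction with
  | algebraMap r =>
    intro y hy
    rw [Algebra.algebraMap_eq_smul_one, smul_mul_assoc, one_mul, map_smul, map_smul, hy, smul_zero]
  | ι v =>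
    intro y hy
    rw [hD.map_map_ι_mul (hdeg_ι v), h_ι, hy, zero_mul, mul_zero, add_zero]
  | mul a b ha hb =>
    intro y hy
    rw [mul_assoc]
    exact ha _ (hb _ hy)
  | add a b ha hb =>
    intro y hy
    rw [add_mul, map_add, map_add, ha _ hy, hb _ hy, add_zero]

end IsAntideriv

-- The coefficient of `w i * w j * w k` in a form.
def coord3 (i j k : Fin 6) : Lambda →ₗ[ℂ] ℂ :=
  liftAlternating (Pi.single 3
    ((Matrix.detRowAlternating : (Fin 3 → ℂ) [⋀^Fin 3]→ₗ[ℂ] ℂ).compLinearMap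
      (LinearMap.funLeft ℂ ℂ ![i, j, k])))

theorem coord3_w_mul_w_mul_w (i j k a b c : Fin 6) :
    coord3 i j k (w a * w b * w c) =
      (Matrix.of fun r s : Fin 3 =>
        (Pi.single (![a, b, c] r) 1 : Fin 6 → ℂ) (![i, j, k] s)).det := by
  have : w a * w b * w c = ιMulti ℂ 3 ![Pi.single a 1, Pi.single b 1, Pi.single c 1] := by
    simp [ιMulti_apply, w, mul_assoc]
  rw [this, coord3, liftAlternating_apply_ιMulti, Pi.single_eq_same]
  rfl

local notation "θ" => w 2 + w 5

theorem theta_mem : θ ∈ Ω¹ := add_mem (w_mem 2) (w_mem 5)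

theorem w_mul_w_comm (i j : Fin 6) : w j * w i = -(w i * w j) :=
  mul_comm_of_mem_range_ι (w_mem i) (w_mem j)

theorem w_mul_w_mem (i j : Fin 6) : w i * w j ∈ ⋀[ℂ]^2 (Fin 6 → ℂ) := by
  rw [exteriorPower, pow_two]
  exact Submodule.mul_mem_mul (w_mem i) (w_mem j)

theorem smul_add_smul_add_smul_add_smul_mul_theta_eq_zero_iff (c₁ c₂ c₃ c₄ : ℂ) :
    c₁ • (w 0 * w 3 * θ) + c₂ • (w 0 * w 4 * θ) + c₃ • (w 1 * w 3 * θ) +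
        c₄ • (w 1 * w 4 * θ) = 0 ↔ c₁ = 0 ∧ c₂ = 0 ∧ c₃ = 0 ∧ c₄ = 0 := by
  refine ⟨fun h => ⟨?_, ?_, ?_, ?_⟩, fun ⟨h₁, h₂, h₃, h₄⟩ => by simp [h₁, h₂, h₃, h₄]⟩
  · simpa [mul_add, coord3_w_mul_w_mul_w, Matrix.det_fin_three] using congrArg (coord3 0 3 2) h
  · simpa [mul_add, coord3_w_mul_w_mul_w, Matrix.det_fin_three] using congrArg (coord3 0 4 2) h
  · simpa [mul_add, coord3_w_mul_w_mul_w, Matrix.det_fin_three] using congrArg (coord3 1 3 2) h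
  · simpa [mul_add, coord3_w_mul_w_mul_w, Matrix.det_fin_three] using congrArg (coord3 1 4 2) h

theorem sub_conj_mul_conj_eq_zero_iff (A G : ℂ) :
    (A - starRingEnd ℂ A) * starRingEnd ℂ G = 0 ↔ (A - starRingEnd ℂ A) * G = 0 := by
  rw [show (A - starRingEnd ℂ A) * starRingEnd ℂ G = -starRingEnd ℂ ((A - starRingEnd ℂ A) * G) by
    simp only [map_mul, map_sub, Complex.conj_conj]; ring, neg_eq_zero, map_eq_zero]

structure StructureEquations (A G12 : ℂ) (G11 G22 : ℝ) (D : Lambda →ₗ[ℂ] Lambda) : Prop where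
  map_w0 : D (w 0) = A • (w 0 * (w 2 + w 5))
  map_w1 : D (w 1) = -A • (w 1 * (w 2 + w 5))
  map_w2 : D (w 2) = (G11 : ℂ) • (w 0 * w 3) + G12 • (w 0 * w 4) +
    (starRingEnd ℂ) G12 • (w 1 * w 3) + (G22 : ℂ) • (w 1 * w 4)
  map_w3 : D (w 3) = (starRingEnd ℂ) A • (w 3 * (w 5 + w 2))
  map_w4 : D (w 4) = -(starRingEnd ℂ) A • (w 4 * (w 5 + w 2))
  map_w5 : D (w 5) = (G11 : ℂ) • (w 3 * w 0) + (starRingEnd ℂ) G12 • (w 3 * w 1) +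
    G12 • (w 4 * w 0) + (G22 : ℂ) • (w 4 * w 1)

namespace StructureEquations

variable {A G12 : ℂ} {G11 G22 : ℝ} {D : Lambda →ₗ[ℂ] Lambda}

theorem map_w_mem (hS : StructureEquations A G12 G11 G22 D) (i : Fin 6) :
    D (w i) ∈ ⋀[ℂ]^2 (Fin 6 → ℂ) := by
  fin_cases i <;>
    simp only [Fin.zero_eta, Fin.mk_one, Fin.reduceFinMk, hS.map_w0, hS.map_w1, hS.map_w2,
      hS.map_w3, hS.map_w4, hS.map_w5, mul_add, smul_add] <;>
    apply_rules [add_mem, Submodule.smul_mem, w_mul_w_mem]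

theorem map_w3_theta (hS : StructureEquations A G12 G11 G22 D) :
    D (w 3) = starRingEnd ℂ A • (w 3 * θ) := by
  rw [hS.map_w3, add_comm (w 5)]

theorem map_w4_theta (hS : StructureEquations A G12 G11 G22 D) :
    D (w 4) = -starRingEnd ℂ A • (w 4 * θ) := by
  rw [hS.map_w4, add_comm (w 5)]

theorem map_theta (hS : StructureEquations A G12 G11 G22 D) : D θ = 0 := by
  rw [map_add, hS.map_w2, hS.map_w5, w_mul_w_comm 0 3, w_mul_w_comm 1 3, w_mul_w_comm 0 4,
    w_mul_w_comm 1 4]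
  module

theorem map_map_w2 (hS : StructureEquations A G12 G11 G22 D) (hD : IsAntideriv D) :
    D (D (w 2)) = -((A + starRingEnd ℂ A) * G11) • (w 0 * w 3 * θ) +
      -((A - starRingEnd ℂ A) * G12) • (w 0 * w 4 * θ) +
      ((A - starRingEnd ℂ A) * starRingEnd ℂ G12) • (w 1 * w 3 * θ) +
      ((A + starRingEnd ℂ A) * G22) • (w 1 * w 4 * θ) := by
  have h03 := hD.map_mul_of_eq_smul_mul (w_mem 0) (w_mem 3) theta_mem hS.map_w0 hS.map_w3_theta
  have h04 := hD.map_mul_of_eq_smul_mul (w_mem 0) (w_mem 4) theta_mem hS.map_w0 hS.map_w4_theta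
  have h13 := hD.map_mul_of_eq_smul_mul (w_mem 1) (w_mem 3) theta_mem hS.map_w1 hS.map_w3_theta
  have h14 := hD.map_mul_of_eq_smul_mul (w_mem 1) (w_mem 4) theta_mem hS.map_w1 hS.map_w4_theta
  rw [hS.map_w2]
  simp only [map_add, map_smul, h03, h04, h13, h14]
  module

theorem map_map_w5 (hS : StructureEquations A G12 G11 G22 D) :
    D (D (w 5)) = -D (D (w 2)) := by
  refine eq_neg_of_add_eq_zero_right ?_
  rw [← map_add, ← map_add, hS.map_theta, map_zero]

theorem forall_map_map_w_eq_zero_iff (hS : StructureEquations A G12 G11 G22 D)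
    (hD : IsAntideriv D) : (∀ i, D (D (w i)) = 0) ↔ D (D (w 2)) = 0 := by
  refine ⟨fun h => h 2, fun h i => ?_⟩
  fin_cases i
  · exact hD.map_map_of_eq_smul_mul (w_mem 0) theta_mem hS.map_w0 hS.map_theta
  · exact hD.map_map_of_eq_smul_mul (w_mem 1) theta_mem hS.map_w1 hS.map_theta
  · exact h
  · exact hD.map_map_of_eq_smul_mul (w_mem 3) theta_mem hS.map_w3_theta hS.map_theta
  · exact hD.map_map_of_eq_smul_mul (w_mem 4) theta_mem hS.map_w4_theta hS.map_theta
  · exact hS.map_map_w5.trans (by rw [h, neg_zero])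

end StructureEquations

/-- for the structure equations
`dω¹ = A ω¹∧(ω³+ω̄³)`, `dω² = −A ω²∧(ω³+ω̄³)`,
`dω³ = G₁₁ ω¹∧ω̄¹ + G₁₂ ω¹∧ω̄² + Ḡ₁₂ ω²∧ω̄¹ + G₂₂ ω²∧ω̄²` (`G₁₁, G₂₂` real),
one has `d² = 0` iff `(A+Ā)G₁₁ = 0`, `(A+Ā)G₂₂ = 0` and `(A−Ā)G₁₂ = 0`. -/
theorem stmt9 (A G12 : ℂ) (G11 G22 : ℝ)
    (D : Lambda →ₗ[ℂ] Lambda) (hD : IsAntideriv D)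
    (h1 : D (w 0) = A • (w 0 * (w 2 + w 5)))
    (h2 : D (w 1) = -A • (w 1 * (w 2 + w 5)))
    (h3 : D (w 2) = (G11 : ℂ) • (w 0 * w 3) + G12 • (w 0 * w 4) +
      (starRingEnd ℂ) G12 • (w 1 * w 3) + (G22 : ℂ) • (w 1 * w 4))
    (h4 : D (w 3) = (starRingEnd ℂ) A • (w 3 * (w 5 + w 2)))
    (h5 : D (w 4) = -(starRingEnd ℂ) A • (w 4 * (w 5 + w 2)))
    (h6 : D (w 5) = (G11 : ℂ) • (w 3 * w 0) + (starRingEnd ℂ) G12 • (w 3 * w 1) +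
      G12 • (w 4 * w 0) + (G22 : ℂ) • (w 4 * w 1)) :
    (∀ x : Lambda, D (D x) = 0) ↔
      ((A + (starRingEnd ℂ) A) * G11 = 0 ∧ (A + (starRingEnd ℂ) A) * G22 = 0 ∧
        (A - (starRingEnd ℂ) A) * G12 = 0) := by
  have hS : StructureEquations A G12 G11 G22 D := ⟨h1, h2, h3, h4, h5, h6⟩
  rw [hD.map_map_eq_zero_iff hS.map_w_mem, hS.forall_map_map_w_eq_zero_iff hD, hS.map_map_w2 hD,
    smul_add_smul_add_smul_add_smul_mul_theta_eq_zero_iff, neg_eq_zero, neg_eq_zero,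
    sub_conj_mul_conj_eq_zero_iff]
  tauto
end
end
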